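/- arXiv:1502.01867 — 4 statements merged into one kernel-verified Lean document; each statement's English description precedes it below -/
import Mathlib

section
/- With the hypotheses of the Kropina change with an h-vector (L smooth 1-homogeneous positive, β = bᵢyⁱ > 0, ∂ᵢβ = bᵢ, L∂ⱼbᵢ = ρhᵢⱼ, τ = L/β, mᵢ = bᵢ − (1/τ)lᵢ), the second derivatives satisfy *Lᵢⱼ := ∂ᵢ∂ⱼ(L²/β) = (2τ − ρτ²)Lᵢⱼ + (2τ²/β) mᵢmⱼ, where Lᵢⱼ = ∂ᵢ∂ⱼL. -/
open scoped BigOperators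

/-- Partial derivative of `f` in the `i`-th coordinate direction. -/
noncomputable def pd {n : ℕ} (f : (Fin n → ℝ) → ℝ) (i : Fin n) (y : Fin n → ℝ) : ℝ :=
  fderiv ℝ f y (Pi.single i 1)

theorem pd_congr_nhds {n : ℕ} {f g : (Fin n → ℝ) → ℝ} {i : Fin n} {y : Fin n → ℝ}
    (h : f =ᶠ[nhds y] g) : pd f i y = pd g i y := by
  unfold pd; rw [h.fderiv_eq]

theorem pd_mul {n : ℕ} {f g : (Fin n → ℝ) → ℝ} {i : Fin n} {y : Fin n → ℝ}
    (hf : DifferentiableAt ℝ f y) (hg : DifferentiableAt ℝ g y) :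
    pd (fun z => f z * g z) i y = pd f i y * g y + f y * pd g i y := by
  unfold pd
  rw [fderiv_fun_mul hf hg]
  simp
  ring

theorem pd_const_mul {n : ℕ} {f : (Fin n → ℝ) → ℝ} {i : Fin n} {y : Fin n → ℝ}
    (hf : DifferentiableAt ℝ f y) (c : ℝ) :
    pd (fun z => c * f z) i y = c * pd f i y := by
  unfold pd
  rw [fderiv_const_mul hf c]
  simp

theorem pd_sub {n : ℕ} {f g : (Fin n → ℝ) → ℝ} {i : Fin n} {y : Fin n → ℝ}
    (hf : DifferentiableAt ℝ f y) (hg : DifferentiableAt ℝ g y) :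
    pd (fun z => f z - g z) i y = pd f i y - pd g i y := by
  unfold pd
  rw [fderiv_fun_sub hf hg]
  simp

theorem pd_inv {n : ℕ} {g : (Fin n → ℝ) → ℝ} {i : Fin n} {y : Fin n → ℝ}
    (hg : DifferentiableAt ℝ g y) (hne : g y ≠ 0) :
    pd (fun z => (g z)⁻¹) i y = -pd g i y / g y ^ 2 := by
  have h1 := (hasFDerivAt_inv' (𝕜 := ℝ) (R := ℝ) hne).comp y hg.hasFDerivAt
  have h1' : HasFDerivAt (fun z => (g z)⁻¹)
      ((-(ContinuousLinearMap.mulLeftRight ℝ ℝ (g y)⁻¹) (g y)⁻¹).comp (fderiv ℝ g y)) y := h1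
  unfold pd
  rw [h1'.fderiv]
  simp [ContinuousLinearMap.mulLeftRight_apply]
  field_simp

theorem pd_div {n : ℕ} {f g : (Fin n → ℝ) → ℝ} {i : Fin n} {y : Fin n → ℝ}
    (hf : DifferentiableAt ℝ f y) (hg : DifferentiableAt ℝ g y) (hne : g y ≠ 0) :
    pd (fun z => f z / g z) i y = (pd f i y * g y - f y * pd g i y) / g y ^ 2 := by
  have h2 : (fun z => f z / g z) = fun z => f z * (g z)⁻¹ := by
    funext z; rw [div_eq_mul_inv]
  rw [h2, pd_mul (g := fun z => (g z)⁻¹) hf (hg.inv hne), pd_inv hg hne]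
  field_simp
  ring

/-- Kropina change with an h-vector: the second derivatives of `*L = L²/β`
satisfy `*Lᵢⱼ = (2τ − ρτ²) Lᵢⱼ + (2τ²/β) mᵢ mⱼ`, where `τ = L/β`,
`mᵢ = bᵢ − (1/τ) lᵢ`, `Lᵢⱼ = ∂ᵢ∂ⱼL`. -/
theorem kropina_second_derivative
    {n : ℕ} (U : Set (Fin n → ℝ)) (hU : IsOpen U)
    (hcone : ∀ y ∈ U, ∀ t : ℝ, 0 < t → t • y ∈ U)
    (L : (Fin n → ℝ) → ℝ) (b : Fin n → (Fin n → ℝ) → ℝ) (ρ : ℝ)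
    (hL : ContDiffOn ℝ (⊤ : ℕ∞) L U)
    (hb : ∀ i, ContDiffOn ℝ (⊤ : ℕ∞) (b i) U)
    (hhom : ∀ y ∈ U, ∀ t : ℝ, 0 < t → L (t • y) = t * L y)
    (hLpos : ∀ y ∈ U, 0 < L y)
    (hβpos : ∀ y ∈ U, 0 < ∑ j, b j y * y j)
    (hdβ : ∀ y ∈ U, ∀ i : Fin n, pd (fun z => ∑ j, b j z * z j) i y = b i y)
    (hvec : ∀ y ∈ U, ∀ i j : Fin n,
      L y * pd (b i) j y = ρ * (L y * pd (fun z => pd L i z) j y)) :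
    ∀ y ∈ U, ∀ i j : Fin n,
      pd (fun z => pd (fun w => L w ^ 2 / (∑ k, b k w * w k)) i z) j y =
        (2 * (L y / (∑ k, b k y * y k))
            - ρ * (L y / (∑ k, b k y * y k)) ^ 2) * pd (fun w => pd L i w) j y
        + (2 * (L y / (∑ k, b k y * y k)) ^ 2 / (∑ k, b k y * y k))
            * (b i y - ((∑ k, b k y * y k) / L y) * pd L i y)
            * (b j y - ((∑ k, b k y * y k) / L y) * pd L j y) := by
  intro y hy i j
  -- differentiability infrastructure
  have diffOf : ∀ f : (Fin n → ℝ) → ℝ, ContDiffOn ℝ (⊤ : ℕ∞) f U →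
      ∀ z ∈ U, DifferentiableAt ℝ f z := fun f hf z hz =>
    (hf.differentiableOn (by simp)).differentiableAt (hU.mem_nhds hz)
  have hβC : ContDiffOn ℝ (⊤ : ℕ∞) (fun z : Fin n → ℝ => ∑ k, b k z * z k) U := by
    apply ContDiffOn.sum
    intro k _
    exact (hb k).mul ((ContinuousLinearMap.proj (R := ℝ) (φ := fun _ : Fin n => ℝ)
      k).contDiff.contDiffOn)
  have hliC : ∀ i : Fin n, ContDiffOn ℝ (⊤ : ℕ∞) (fun z => pd L i z) U := by
    intro i
    have h1 : ContDiffOn ℝ (⊤ : ℕ∞) (fderiv ℝ L) U := hL.fderiv_of_isOpen hU (by simp)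
    exact h1.clm_apply contDiffOn_const
  have hβne : ∀ z ∈ U, (∑ k, b k z * z k) ≠ 0 := fun z hz => ne_of_gt (hβpos z hz)
  have hLne : L y ≠ 0 := ne_of_gt (hLpos y hy)
  have hLy' := diffOf L hL y hy
  have hβy' := diffOf _ hβC y hy
  have hliy := diffOf _ (hliC i) y hy
  have hbiy := diffOf (b i) (hb i) y hy
  -- first derivative of L²/β on U
  have claimA : ∀ z ∈ U, pd (fun w => L w ^ 2 / (∑ k, b k w * w k)) i z
      = (2 * (L z * pd L i z) * (∑ k, b k z * z k) - L z ^ 2 * b i z)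
          / (∑ k, b k z * z k) ^ 2 := by
    intro z hz
    have hLz := diffOf L hL z hz
    have hβz := diffOf _ hβC z hz
    have h2 : (fun w => L w ^ 2) = fun w => L w * L w := by funext w; ring
    rw [pd_div (f := fun w => L w ^ 2) (hLz.pow 2) hβz (hβne z hz), h2, pd_mul hLz hLz, hdβ z hz]
    ring
  -- replace the inner pd by its closed form near y
  have stepB : pd (fun z => pd (fun w => L w ^ 2 / (∑ k, b k w * w k)) i z) j y =
      pd (fun z => (2 * (L z * pd L i z) * (∑ k, b k z * z k) - L z ^ 2 * b i z)
          / (∑ k, b k z * z k) ^ 2) j y :=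
    pd_congr_nhds (Filter.eventuallyEq_of_mem (hU.mem_nhds hy) claimA)
  -- h-vector condition
  have hbi' : pd (b i) j y = ρ * pd (fun z => pd L i z) j y := by
    have h := hvec y hy i j
    apply mul_left_cancel₀ hLne
    rw [h]; ring
  -- derivatives of the pieces
  have d1 : pd (fun z => L z * pd L i z) j y
      = pd L j y * pd L i y + L y * pd (fun z => pd L i z) j y := pd_mul hLy' hliy
  have d2 : pd (fun z => 2 * (L z * pd L i z)) j y
      = 2 * (pd L j y * pd L i y + L y * pd (fun z => pd L i z) j y) := by
    rw [pd_const_mul (f := fun z => L z * pd L i z) (hLy'.mul hliy) 2, d1]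
  have d3 : pd (fun z => 2 * (L z * pd L i z) * (∑ k, b k z * z k)) j y
      = 2 * (pd L j y * pd L i y + L y * pd (fun z => pd L i z) j y)
          * (∑ k, b k y * y k) + 2 * (L y * pd L i y) * b j y := by
    rw [pd_mul (f := fun z => 2 * (L z * pd L i z)) ((hLy'.mul hliy).const_mul 2) hβy', d2, hdβ y hy j]
  have d4 : pd (fun z => L z ^ 2) j y = 2 * (L y * pd L j y) := by
    have h2 : (fun w => L w ^ 2) = fun w => L w * L w := by funext w; ring
    rw [h2, pd_mul hLy' hLy']; ring
  have d5 : pd (fun z => L z ^ 2 * b i z) j y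
      = 2 * (L y * pd L j y) * b i y
        + L y ^ 2 * (ρ * pd (fun z => pd L i z) j y) := by
    rw [pd_mul (f := fun z => L z ^ 2) (hLy'.pow 2) hbiy, d4, hbi']
  have d6 : pd (fun z => (∑ k, b k z * z k) ^ 2) j y
      = 2 * ((∑ k, b k y * y k) * b j y) := by
    have h2 : (fun z : Fin n → ℝ => (∑ k, b k z * z k) ^ 2)
        = fun z => (∑ k, b k z * z k) * (∑ k, b k z * z k) := by funext z; ring
    rw [h2, pd_mul hβy' hβy', hdβ y hy j]; ring
  have hA : DifferentiableAt ℝ (fun z => 2 * (L z * pd L i z) * (∑ k, b k z * z k)) y :=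
    ((hLy'.mul hliy).const_mul 2).mul hβy'
  have hB : DifferentiableAt ℝ (fun z => L z ^ 2 * b i z) y := (hLy'.pow 2).mul hbiy
  rw [stepB, pd_div (f := fun z => 2 * (L z * pd L i z) * (∑ k, b k z * z k) - L z ^ 2 * b i z)
      (g := fun z => (∑ k, b k z * z k) ^ 2) (hA.sub hB) (hβy'.pow 2) (pow_ne_zero 2 (hβne y hy)),
    pd_sub hA hB, d3, d5, d6]
  have hβne' := hβne y hy
  field_simp
  ring
end

section
/- Let gᵢⱼ be a positive-definite symmetric matrix, lᵢ = gᵢⱼyʲ/L with L² = gᵢⱼyⁱyʲ, and bᵢ a covector with b² = gⁱʲbᵢbⱼ, β = bᵢyⁱ > 0, τ = L/β, and suppose 2τ² − ρτ³ ≠ 0 and 2b²τ − ρ ≠ 0. Then the matrix *gᵢⱼ = (2τ²−ρτ³)gᵢⱼ + 3τ⁴bᵢbⱼ − 4τ³(lᵢbⱼ+bᵢlⱼ) + (4τ²+ρτ³)lᵢlⱼ has inverse *gⁱʲ = (2τ²−ρτ³)⁻¹ [ gⁱʲ − (2τ/(2b²τ−ρ)) bⁱbʲ + ((4−ρτ)/(2b²τ−ρ))(lⁱbʲ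 + bⁱlʲ) − ((3ρb²τ³ − ρ²τ² − 4b²τ² − 2ρτ + 8)/(τ(2b²τ−ρ))) lⁱlʲ ], where indices are raised with gⁱʲ. -/
/-!
`*g = c g + Pᵀ M P` is a rank-two update of `c g = (2τ² − ρτ³) g` along the rows `b, l` of `P`.
For any `N`, `(g⁻¹ + g⁻¹ Pᵀ N P g⁻¹) (c g + Pᵀ M P) = c + g⁻¹ Pᵀ (M + c N + N K M) P` with
`K = P g⁻¹ Pᵀ` the Gram matrix of `b, l` under `g⁻¹`, so the claimed inverse is correct as soon
as the `2 × 2` identity `M + c N + N K M = 0` holds. Since `lⁱ = yⁱ / L`, that Gram matrix is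
`!![b², 1/τ; 1/τ, 1]`, and the identity is a rational-function computation in `τ, ρ, b²`.
-/

open Matrix

theorem Matrix.mul_eq_one_of_low_rank_update {K m n : Type*} [Field K] [Fintype m] [Fintype n]
    [DecidableEq n] (g : Matrix n n K) (hg : IsUnit g.det) (P : Matrix m n K) (M N : Matrix m m K)
    {c : K} (hc : c ≠ 0) (hMN : M + c • N + N * (P * g⁻¹ * Pᵀ) * M = 0) :
    (c⁻¹ • (g⁻¹ + g⁻¹ * Pᵀ * N * (P * g⁻¹))) * (c • g + Pᵀ * M * P) = 1 := by
  have expand : (g⁻¹ + g⁻¹ * Pᵀ * N * (P * g⁻¹)) * (c • g + Pᵀ * M * P)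
      = c • 1 + g⁻¹ * Pᵀ * (M + c • N + N * (P * g⁻¹ * Pᵀ) * M) * P := by
    simp only [Matrix.add_mul, Matrix.mul_add, Matrix.mul_smul, Matrix.smul_mul, smul_add,
      Matrix.mul_assoc, nonsing_inv_mul g hg, Matrix.mul_one]
    abel
  rw [Matrix.smul_mul, expand, hMN, Matrix.mul_zero, Matrix.zero_mul, add_zero, smul_smul,
    inv_mul_cancel₀ hc, one_smul]

theorem Matrix.transpose_of_mul_mul_of_apply {n R : Type*} [CommSemiring R] (u v : n → R)
    (A : Matrix (Fin 2) (Fin 2) R) (i j : n) :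
    ((of ![u, v])ᵀ * A * of ![u, v]) i j
      = A 0 0 * u i * u j + A 0 1 * u i * v j + A 1 0 * v i * u j + A 1 1 * v i * v j := by
  simp only [mul_apply, Fin.sum_univ_two, transpose_apply, of_apply, cons_val_zero, cons_val_one]
  ring

theorem Matrix.of_mul_mul_transpose_of_apply {m n R : Type*} [Fintype n] [CommSemiring R]
    (u : m → n → R) (A : Matrix n n R) (a c : m) :
    (of u * A * (of u)ᵀ) a c = u a ⬝ᵥ A *ᵥ u c := by
  rw [dotProduct_mulVec]
  rfl

theorem gram_inv_covector_normalized_lowered {n : Type*} [Fintype n] [DecidableEq n]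
    (g : Matrix n n ℝ) (hg : IsUnit g.det) (hsym : g.IsSymm) (b y : n → ℝ) {L : ℝ}
    (hL0 : L ≠ 0) (hL : L ^ 2 = y ⬝ᵥ g *ᵥ y) :
    of ![b, L⁻¹ • g *ᵥ y] * g⁻¹ * (of ![b, L⁻¹ • g *ᵥ y])ᵀ
      = !![b ⬝ᵥ g⁻¹ *ᵥ b, (b ⬝ᵥ y) / L; (b ⬝ᵥ y) / L, 1] := by
  have hraise : g⁻¹ *ᵥ (L⁻¹ • g *ᵥ y) = L⁻¹ • y := by
    rw [mulVec_smul, mulVec_mulVec, nonsing_inv_mul g hg, one_mulVec]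
  have hsymm : ∀ u v : n → ℝ, u ⬝ᵥ g⁻¹ *ᵥ v = v ⬝ᵥ g⁻¹ *ᵥ u := fun u v => by
    rw [dotProduct_mulVec, ← mulVec_transpose, hsym.inv.eq, dotProduct_comm]
  have hbl : b ⬝ᵥ g⁻¹ *ᵥ (L⁻¹ • g *ᵥ y) = (b ⬝ᵥ y) / L := by
    rw [hraise, dotProduct_smul, smul_eq_mul, inv_mul_eq_div]
  have hll : (L⁻¹ • g *ᵥ y) ⬝ᵥ g⁻¹ *ᵥ (L⁻¹ • g *ᵥ y) = 1 := by
    rw [hraise, smul_dotProduct, dotProduct_smul, dotProduct_comm, ← hL, smul_eq_mul, smul_eq_mul]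
    field_simp
  ext a c
  rw [of_mul_mul_transpose_of_apply]
  fin_cases a <;> fin_cases c
  · rfl
  · exact hbl
  · exact (hsymm _ _).trans hbl
  · exact hll

/-- `*gᵢⱼ − (2τ² − ρτ³) gᵢⱼ` in the frame `(bᵢ, lᵢ)`. -/
def kropinaUpdate (τ ρ : ℝ) : Matrix (Fin 2) (Fin 2) ℝ :=
  !![3 * τ ^ 4, -(4 * τ ^ 3); -(4 * τ ^ 3), 4 * τ ^ 2 + ρ * τ ^ 3]

/-- `(2τ² − ρτ³) *gⁱʲ − gⁱʲ` in the frame `(bⁱ, lⁱ)`. -/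
noncomputable def kropinaInvUpdate (τ ρ bsq : ℝ) : Matrix (Fin 2) (Fin 2) ℝ :=
  !![-(2 * τ / (2 * bsq * τ - ρ)), (4 - ρ * τ) / (2 * bsq * τ - ρ);
    (4 - ρ * τ) / (2 * bsq * τ - ρ),
    -((3 * ρ * bsq * τ ^ 3 - ρ ^ 2 * τ ^ 2 - 4 * bsq * τ ^ 2 - 2 * ρ * τ + 8)
      / (τ * (2 * bsq * τ - ρ)))]

theorem kropinaUpdate_add_smul_kropinaInvUpdate {τ ρ bsq : ℝ} (hτ : τ ≠ 0)
    (hD : 2 * bsq * τ - ρ ≠ 0) :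
    kropinaUpdate τ ρ + (2 * τ ^ 2 - ρ * τ ^ 3) • kropinaInvUpdate τ ρ bsq
      + kropinaInvUpdate τ ρ bsq * !![bsq, τ⁻¹; τ⁻¹, 1] * kropinaUpdate τ ρ = 0 := by
  have hD' : τ * 2 * bsq - ρ ≠ 0 := by convert hD using 1; ring
  ext a b
  fin_cases a <;> fin_cases b <;>
    simp only [kropinaUpdate, kropinaInvUpdate, Matrix.add_apply, Matrix.smul_apply, mul_apply,
      Fin.sum_univ_two, of_apply, cons_val', cons_val_zero, cons_val_one, cons_val_fin_one,
      Matrix.zero_apply, smul_eq_mul, Fin.zero_eta, Fin.mk_one] <;>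
    field_simp <;> ring

theorem kropina_inverse_metric_general
    {n : ℕ} (g : Matrix (Fin n) (Fin n) ℝ) (hg : g.PosDef)
    (hgsym : g.IsSymm)
    (y : Fin n → ℝ) (bb : Fin n → ℝ) (L ρ : ℝ)
    (hL : L ^ 2 = ∑ i, ∑ j, g i j * y i * y j)
    (l : Fin n → ℝ) (hl : ∀ i, l i = (∑ j, g i j * y j) / L)
    (bup lup : Fin n → ℝ)
    (hbup : ∀ i, bup i = ∑ j, g⁻¹ i j * bb j)
    (hlup : ∀ i, lup i = ∑ j, g⁻¹ i j * l j)
    (bsq : ℝ) (hbsq : bsq = ∑ i, ∑ j, g⁻¹ i j * bb i * bb j)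
    (β : ℝ) (hβ : β = ∑ i, bb i * y i)
    (τ : ℝ) (hτ : τ = L / β)
    (h1 : 2 * τ ^ 2 - ρ * τ ^ 3 ≠ 0) (h2 : 2 * bsq * τ - ρ ≠ 0)
    (gstar : Matrix (Fin n) (Fin n) ℝ)
    (hgstar : ∀ i j, gstar i j =
      (2 * τ ^ 2 - ρ * τ ^ 3) * g i j + 3 * τ ^ 4 * bb i * bb j
        - 4 * τ ^ 3 * (l i * bb j + bb i * l j)
        + (4 * τ ^ 2 + ρ * τ ^ 3) * l i * l j)
    (gstarInv : Matrix (Fin n) (Fin n) ℝ)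
    (hgstarInv : ∀ i j, gstarInv i j =
      (2 * τ ^ 2 - ρ * τ ^ 3)⁻¹ *
        (g⁻¹ i j - (2 * τ / (2 * bsq * τ - ρ)) * bup i * bup j
          + ((4 - ρ * τ) / (2 * bsq * τ - ρ)) * (lup i * bup j + bup i * lup j)
          - ((3 * ρ * bsq * τ ^ 3 - ρ ^ 2 * τ ^ 2 - 4 * bsq * τ ^ 2 - 2 * ρ * τ + 8)
              / (τ * (2 * bsq * τ - ρ))) * lup i * lup j)) :
    ∀ i k, (∑ j, gstarInv i j * gstar j k) = if i = k then 1 else 0 := by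
  have hτ0 : τ ≠ 0 := by rintro rfl; simp at h1
  have hL0 : L ≠ 0 := by rintro rfl; exact hτ0 (by simp [hτ])
  have hdet : IsUnit g.det := (isUnit_iff_isUnit_det g).mp hg.isUnit
  have hl' : l = L⁻¹ • g *ᵥ y := funext fun i => by
    simp [hl, mulVec, dotProduct, div_eq_inv_mul]
  have hL' : L ^ 2 = y ⬝ᵥ g *ᵥ y := by
    simp [hL, mulVec, dotProduct, Finset.mul_sum, mul_assoc, mul_left_comm]
  set P := of ![bb, l]
  have hstar : gstar = (2 * τ ^ 2 - ρ * τ ^ 3) • g + Pᵀ * kropinaUpdate τ ρ * P := by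
    ext i j
    rw [hgstar, Matrix.add_apply, transpose_of_mul_mul_of_apply]
    simp only [Matrix.smul_apply, smul_eq_mul, kropinaUpdate, of_apply, cons_val', cons_val_zero,
      cons_val_fin_one, cons_val_one]
    ring
  have hraised : P * g⁻¹ = of ![bup, lup] := by
    ext a j
    fin_cases a <;> simp [P, mul_apply, hbup, hlup, mul_comm, hgsym.inv.apply]
  have hinv : gstarInv = (2 * τ ^ 2 - ρ * τ ^ 3)⁻¹ •
      (g⁻¹ + g⁻¹ * Pᵀ * kropinaInvUpdate τ ρ bsq * (P * g⁻¹)) := by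
    have hraised_transpose : g⁻¹ * Pᵀ = (of ![bup, lup])ᵀ := by
      rw [← hraised, transpose_mul, hgsym.inv.eq]
    ext i j
    rw [hgstarInv, hraised, hraised_transpose, Matrix.smul_apply, Matrix.add_apply,
      transpose_of_mul_mul_of_apply, smul_eq_mul]
    congr 1
    simp only [kropinaInvUpdate, of_apply, cons_val', cons_val_zero, cons_val_fin_one,
      cons_val_one]
    ring
  have hgram : P * g⁻¹ * Pᵀ = !![bsq, τ⁻¹; τ⁻¹, 1] := by
    have hbsq' : bsq = bb ⬝ᵥ g⁻¹ *ᵥ bb := by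
      simp [hbsq, dotProduct, mulVec, Finset.mul_sum, mul_assoc, mul_left_comm]
    have hτ' : τ⁻¹ = (bb ⬝ᵥ y) / L := by rw [hτ, inv_div, hβ]; rfl
    simp only [P, hl', gram_inv_covector_normalized_lowered g hdet hgsym bb y hL0 hL', hbsq', hτ']
  have key := mul_eq_one_of_low_rank_update g hdet P _ _ h1
    (by rw [hgram]; exact kropinaUpdate_add_smul_kropinaInvUpdate hτ0 h2)
  rw [← hinv, ← hstar] at key
  intro i k
  simpa [mul_apply, one_apply] using congrFun (congrFun key i) k

/-- The inverse of the Kropina-changed metric tensor: with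
`*gᵢⱼ = (2τ²−ρτ³)gᵢⱼ + 3τ⁴bᵢbⱼ − 4τ³(lᵢbⱼ+bᵢlⱼ) + (4τ²+ρτ³)lᵢlⱼ`, one has
`*gⁱʲ = (2τ²−ρτ³)⁻¹ [gⁱʲ − (2τ/(2b²τ−ρ)) bⁱbʲ + ((4−ρτ)/(2b²τ−ρ))(lⁱbʲ+bⁱlʲ)
 − ((3ρb²τ³−ρ²τ²−4b²τ²−2ρτ+8)/(τ(2b²τ−ρ))) lⁱlʲ]`. -/
theorem kropina_inverse_metric
    {n : ℕ} (g : Matrix (Fin n) (Fin n) ℝ) (hg : g.PosDef)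
    (hgsym : g.IsSymm)
    (y : Fin n → ℝ) (bb : Fin n → ℝ) (L ρ : ℝ)
    (hL : L ^ 2 = ∑ i, ∑ j, g i j * y i * y j) (hLpos : 0 < L)
    (l : Fin n → ℝ) (hl : ∀ i, l i = (∑ j, g i j * y j) / L)
    (bup lup : Fin n → ℝ)
    (hbup : ∀ i, bup i = ∑ j, g⁻¹ i j * bb j)
    (hlup : ∀ i, lup i = ∑ j, g⁻¹ i j * l j)
    (bsq : ℝ) (hbsq : bsq = ∑ i, ∑ j, g⁻¹ i j * bb i * bb j)
    (β : ℝ) (hβ : β = ∑ i, bb i * y i) (hβpos : 0 < β)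
    (τ : ℝ) (hτ : τ = L / β)
    (h1 : 2 * τ ^ 2 - ρ * τ ^ 3 ≠ 0) (h2 : 2 * bsq * τ - ρ ≠ 0)
    (gstar : Matrix (Fin n) (Fin n) ℝ)
    (hgstar : ∀ i j, gstar i j =
      (2 * τ ^ 2 - ρ * τ ^ 3) * g i j + 3 * τ ^ 4 * bb i * bb j
        - 4 * τ ^ 3 * (l i * bb j + bb i * l j)
        + (4 * τ ^ 2 + ρ * τ ^ 3) * l i * l j)
    (gstarInv : Matrix (Fin n) (Fin n) ℝ)
    (hgstarInv : ∀ i j, gstarInv i j =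
      (2 * τ ^ 2 - ρ * τ ^ 3)⁻¹ *
        (g⁻¹ i j - (2 * τ / (2 * bsq * τ - ρ)) * bup i * bup j
          + ((4 - ρ * τ) / (2 * bsq * τ - ρ)) * (lup i * bup j + bup i * lup j)
          - ((3 * ρ * bsq * τ ^ 3 - ρ ^ 2 * τ ^ 2 - 4 * bsq * τ ^ 2 - 2 * ρ * τ + 8)
              / (τ * (2 * bsq * τ - ρ))) * lup i * lup j)) :
    ∀ i k, (∑ j, gstarInv i j * gstar j k) = if i = k then 1 else 0 :=
  kropina_inverse_metric_general g hg hgsym y bb L ρ hL l hl bup lup hbup hlup bsq hbsq β hβ τ hτ h1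
    h2 gstar hgstar gstarInv hgstarInv
end

section
/- Under the Kropina change with h-vector, if the vector bᵢ is tangent to the hypersurface (bⱼNʲ = 0, where Nⁱ is the g-unit normal with lᵢNⁱ = 0 and gᵢⱼBⁱ_αNʲ = 0), then *Nⁱ = Nⁱ/√(2τ² − ρτ³) is the unique (up to sign) *g-unit normal to the hypersurface: *gᵢⱼBⁱ_α(*Nʲ) = 0 and *gᵢⱼ(*Nⁱ)(*Nʲ) = 1, provided 2τ² − ρτ³ > 0. -/
open scoped BigOperators

section BilinearSums

variable {ι : Type*} [Fintype ι]

/-- Every correction term of a Kropina-type change `g'` is a product `u i * v j` with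
`v ∈ {b, l}`, so it drops out of `g'(X, Y)` as soon as `Y` is orthogonal to `b` and `l`. -/
theorem sum_sum_mul_eq_of_orthogonal_right {g g' : ι → ι → ℝ} {b l : ι → ℝ}
    {c p q r : ℝ}
    (hg' : ∀ i j, g' i j =
      c * g i j + p * b i * b j - q * (l i * b j + b i * l j) + r * l i * l j)
    (X : ι → ℝ) {Y : ι → ℝ} (hb : ∑ j, b j * Y j = 0) (hl : ∑ j, l j * Y j = 0) :
    ∑ i, ∑ j, g' i j * X i * Y j = c * ∑ i, ∑ j, g i j * X i * Y j := by
  have row : ∀ i, ∑ j, g' i j * X i * Y j = c * ∑ j, g i j * X i * Y j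
      + X i * ((p * b i - q * l i) * ∑ j, b j * Y j + (r * l i - q * b i) * ∑ j, l j * Y j) := by
    intro i
    simp only [hg', Finset.mul_sum, ← Finset.sum_add_distrib]
    exact Finset.sum_congr rfl fun j _ => by ring
  simp only [row, hb, hl, mul_zero, add_zero, Finset.mul_sum]

theorem sum_sum_mul_div_right (g : Matrix ι ι ℝ) (X Y : ι → ℝ) (s : ℝ) :
    ∑ i, ∑ j, g i j * X i * (Y j / s) = (∑ i, ∑ j, g i j * X i * Y j) / s := by
  simp only [Finset.sum_div, mul_div_assoc]

theorem sum_sum_div_mul_div (g : Matrix ι ι ℝ) (X Y : ι → ℝ) (s : ℝ) :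
    ∑ i, ∑ j, g i j * (X i / s) * (Y j / s) = (∑ i, ∑ j, g i j * X i * Y j) / (s * s) := by
  simp only [Finset.sum_div]
  exact Finset.sum_congr rfl fun i _ => Finset.sum_congr rfl fun j _ => by ring

theorem sum_mul_div_right (b Y : ι → ℝ) (s : ℝ) :
    ∑ j, b j * (Y j / s) = (∑ j, b j * Y j) / s := by
  simp only [Finset.sum_div, mul_div_assoc]

end BilinearSums

/-- If the h-vector `b` is tangent to the hypersurface (`bⱼNʲ = 0`), then
`*Nⁱ = Nⁱ/√(2τ² − ρτ³)` is a `*g`-unit normal to the hypersurface: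
`*gᵢⱼ Bⁱ_α (*Nʲ) = 0` and `*gᵢⱼ (*Nⁱ)(*Nʲ) = 1`, provided `2τ² − ρτ³ > 0`. -/
theorem kropina_unit_normal
    {n m : ℕ} (g : Matrix (Fin n) (Fin n) ℝ)
    (l bb N : Fin n → ℝ) (B : Fin m → Fin n → ℝ) (τ ρ : ℝ)
    (gstar : Fin n → Fin n → ℝ)
    (hgstar : ∀ i j, gstar i j =
      (2 * τ ^ 2 - ρ * τ ^ 3) * g i j + 3 * τ ^ 4 * bb i * bb j
        - 4 * τ ^ 3 * (l i * bb j + bb i * l j)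
        + (4 * τ ^ 2 + ρ * τ ^ 3) * l i * l j)
    (hBN : ∀ α, (∑ i, ∑ j, g i j * B α i * N j) = 0)
    (hNN : (∑ i, ∑ j, g i j * N i * N j) = 1)
    (hlN : (∑ i, l i * N i) = 0)
    (hbN : (∑ j, bb j * N j) = 0)
    (hpos : 0 < 2 * τ ^ 2 - ρ * τ ^ 3)
    (Nstar : Fin n → ℝ)
    (hNstar : ∀ i, Nstar i = N i / Real.sqrt (2 * τ ^ 2 - ρ * τ ^ 3)) :
    (∀ α, (∑ i, ∑ j, gstar i j * B α i * Nstar j) = 0) ∧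
      (∑ i, ∑ j, gstar i j * Nstar i * Nstar j) = 1 := by
  obtain rfl : Nstar = fun i => N i / Real.sqrt (2 * τ ^ 2 - ρ * τ ^ 3) := funext hNstar
  have hbNstar : ∑ j, bb j * (N j / √(2 * τ ^ 2 - ρ * τ ^ 3)) = 0 := by
    rw [sum_mul_div_right, hbN, zero_div]
  have hlNstar : ∑ j, l j * (N j / √(2 * τ ^ 2 - ρ * τ ^ 3)) = 0 := by
    rw [sum_mul_div_right, hlN, zero_div]
  refine ⟨fun α => ?_, ?_⟩
  · rw [sum_sum_mul_eq_of_orthogonal_right hgstar _ hbNstar hlNstar, sum_sum_mul_div_right, hBN,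
      zero_div, mul_zero]
  · rw [sum_sum_mul_eq_of_orthogonal_right hgstar _ hbNstar hlNstar, sum_sum_div_mul_div, hNN,
      Real.mul_self_sqrt hpos.le, mul_one_div_cancel hpos.ne']
end

section
/- Under the Kropina change with h-vector and with b tangent to the hypersurface (bⱼNʲ = 0, hence mⱼNʲ = 0 where mᵢ = bᵢ − (1/τ)lᵢ), the transvection of the transformed Cartan tensor gives *Cᵢⱼₖ Bⁱ_α Bʲ_β Nᵏ = (2τ² − ρτ³) Cᵢⱼₖ Bⁱ_α Bʲ_β Nᵏ. Consequently the second fundamental v-tensors satisfy *M_{αβ} = √(2τ² − ρτ³) · M_{αβ}. -/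
/-!
In the transvection `*Cᵢⱼₖ Bⁱ_α Bʲ_β Nᵏ` every correction term of the Kropina change contains a
factor `mₖNᵏ` or `hᵢⱼBⁱNʲ` (after using the symmetry of `h`), and both vanish because `N` is normal
to the hypersurface and `b` is tangent to it. Only the conformal part `(2τ² − ρτ³) Cᵢⱼₖ` survives,
and dividing by `√(2τ² − ρτ³)` to normalise `N` leaves the factor `√(2τ² − ρτ³)` on `M_{αβ}`.
-/

open Finset Matrix

section

variable {ι R : Type*} [Fintype ι] [CommRing R]

def contract₂ (h : ι → ι → R) (x y : ι → R) : R :=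
  ∑ i, ∑ j, h i j * x i * y j

theorem contract₂_comm {h : ι → ι → R} (hsymm : ∀ i j, h i j = h j i) (x y : ι → R) :
    contract₂ h x y = contract₂ h y x := by
  unfold contract₂
  rw [Finset.sum_comm]
  exact sum_congr rfl fun i _ => sum_congr rfl fun j _ => by rw [hsymm]; ring

def contract₃ (x y z : ι → R) : (ι → ι → ι → R) →ₗ[R] R where
  toFun T := ∑ i, ∑ j, ∑ k, T i j k * x i * y j * z k
  map_add' T S := by simp only [Pi.add_apply, add_mul, sum_add_distrib]
  map_smul' c T := by simp only [Pi.smul_apply, smul_eq_mul, mul_sum, RingHom.id_apply, mul_assoc]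

theorem contract₃_apply (x y z : ι → R) (T : ι → ι → ι → R) :
    contract₃ x y z T = ∑ i, ∑ j, ∑ k, T i j k * x i * y j * z k := rfl

theorem contract₃_rotate (x y z : ι → R) (T : ι → ι → ι → R) :
    contract₃ x y z T = contract₃ y z x (fun j k i => T i j k) := by
  simp only [contract₃_apply]
  rw [Finset.sum_comm]
  exact sum_congr rfl fun j _ => by
    rw [Finset.sum_comm]
    exact sum_congr rfl fun k _ => sum_congr rfl fun i _ => by ring

theorem contract₃_mul_right (f : ι → ι → R) (g x y z : ι → R) :
    contract₃ x y z (fun i j k => f i j * g k) = contract₂ f x y * (g ⬝ᵥ z) := by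
  rw [contract₃_apply, contract₂, sum_mul]
  refine sum_congr rfl fun i _ => ?_
  rw [sum_mul]
  refine sum_congr rfl fun j _ => ?_
  rw [dotProduct, mul_sum]
  exact sum_congr rfl fun k _ => by ring

theorem contract₂_mul (v x y : ι → R) :
    contract₂ (fun i j => v i * v j) x y = (v ⬝ᵥ x) * (v ⬝ᵥ y) := by
  rw [contract₂, dotProduct, dotProduct, sum_mul_sum]
  exact sum_congr rfl fun i _ => sum_congr rfl fun j _ => by ring

def cyclicProduct (h : ι → ι → R) (v : ι → R) : ι → ι → ι → R :=
  fun i j k => h i j * v k + h j k * v i + h k i * v j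

def tripleProduct (v : ι → R) : ι → ι → ι → R :=
  fun i j k => v i * v j * v k

theorem contract₃_cyclicProduct (h : ι → ι → R) (v x y z : ι → R) :
    contract₃ x y z (cyclicProduct h v) =
      contract₂ h x y * (v ⬝ᵥ z) + contract₂ h y z * (v ⬝ᵥ x)
        + contract₂ h z x * (v ⬝ᵥ y) := by
  have hsplit : cyclicProduct h v = (fun i j k => h i j * v k) + (fun i j k => h j k * v i)
      + (fun i j k => h k i * v j) := rfl
  rw [hsplit, map_add, map_add, contract₃_rotate x y z (fun i j k => h j k * v i),
    ← contract₃_rotate z x y (fun k i j => h k i * v j), contract₃_mul_right, contract₃_mul_right,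
    contract₃_mul_right]

theorem contract₃_tripleProduct (v x y z : ι → R) :
    contract₃ x y z (tripleProduct v) = (v ⬝ᵥ x) * (v ⬝ᵥ y) * (v ⬝ᵥ z) := by
  rw [← contract₂_mul]
  exact contract₃_mul_right (fun i j => v i * v j) v x y z

theorem contract₃_div_right {K : Type*} [Field K] (x y z : ι → K) (c : K)
    (T : ι → ι → ι → K) :
    contract₃ x y (fun k => z k / c) T = contract₃ x y z T / c := by
  simp only [contract₃_apply, sum_div, mul_div_assoc]

/-- The Cartan tensor of the Kropina change has this shape with `s = 2τ² − ρτ³`,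
`a = τ²(4 − 3ρτ)/(2β)` and `b = 6τ²/β`. -/
def kropinaCartan (s a b : R) (C : ι → ι → ι → R) (h : ι → ι → R) (m : ι → R) :
    ι → ι → ι → R :=
  s • C - a • cyclicProduct h m - b • tripleProduct m

theorem contract₃_kropinaCartan_of_normal {h : ι → ι → R} (hsymm : ∀ i j, h i j = h j i)
    {m x y N : ι → R} (hmN : m ⬝ᵥ N = 0) (hxN : contract₂ h x N = 0)
    (hyN : contract₂ h y N = 0) (s a b : R) (C : ι → ι → ι → R) :
    contract₃ x y N (kropinaCartan s a b C h m) = s * contract₃ x y N C := by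
  simp only [kropinaCartan, map_sub, map_smul, contract₃_cyclicProduct,
    contract₃_tripleProduct, hmN, contract₂_comm hsymm N, hxN, hyN, smul_eq_mul]
  ring

end

theorem kropina_second_fundamental_v_tensor_general
    {n m : ℕ}
    (C Cstar : Fin n → Fin n → Fin n → ℝ)
    (h : Fin n → Fin n → ℝ)
    (mv N : Fin n → ℝ) (B : Fin m → Fin n → ℝ)
    (τ ρ β : ℝ)
    (hCstar : ∀ i j k, Cstar i j k =
      (2 * τ ^ 2 - ρ * τ ^ 3) * C i j k
        - (τ ^ 2 / (2 * β)) * (4 - 3 * ρ * τ)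
            * (h i j * mv k + h j k * mv i + h k i * mv j)
        - (6 * τ ^ 2 / β) * mv i * mv j * mv k)
    (hhBN : ∀ α, (∑ i, ∑ j, h i j * B α i * N j) = 0)
    (hhsym : ∀ i j, h i j = h j i)
    (hmN : (∑ j, mv j * N j) = 0)
    (Nstar : Fin n → ℝ)
    (hNstar : ∀ k, Nstar k = N k / Real.sqrt (2 * τ ^ 2 - ρ * τ ^ 3))
    (M Mstar : Fin m → Fin m → ℝ)
    (hM : ∀ α γ, M α γ = ∑ i, ∑ j, ∑ k, C i j k * B α i * B γ j * N k)
    (hMstar : ∀ α γ, Mstar α γ = ∑ i, ∑ j, ∑ k, Cstar i j k * B α i * B γ j * Nstar k) :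
    (∀ α γ, (∑ i, ∑ j, ∑ k, Cstar i j k * B α i * B γ j * N k) =
        (2 * τ ^ 2 - ρ * τ ^ 3) * ∑ i, ∑ j, ∑ k, C i j k * B α i * B γ j * N k) ∧
      (∀ α γ, Mstar α γ = Real.sqrt (2 * τ ^ 2 - ρ * τ ^ 3) * M α γ) := by
  set s := 2 * τ ^ 2 - ρ * τ ^ 3
  have hCstar_eq : Cstar = kropinaCartan s ((τ ^ 2 / (2 * β)) * (4 - 3 * ρ * τ)) (6 * τ ^ 2 / β)
      C h mv := by
    ext i j k
    simp only [hCstar, kropinaCartan, cyclicProduct, tripleProduct, Pi.sub_apply,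
      Pi.smul_apply, smul_eq_mul]
    ring
  have hNormal : ∀ α γ, contract₃ (B α) (B γ) N Cstar = s * contract₃ (B α) (B γ) N C :=
    fun α γ => hCstar_eq ▸ contract₃_kropinaCartan_of_normal hhsym hmN (hhBN α) (hhBN γ) ..
  refine ⟨hNormal, fun α γ => ?_⟩
  have hNstar_eq : Nstar = fun k => N k / Real.sqrt s := funext hNstar
  rw [hMstar, hM, ← contract₃_apply, ← contract₃_apply, hNstar_eq, contract₃_div_right,
    hNormal, mul_div_right_comm, Real.div_sqrt]

/-- With `b` tangent to the hypersurface (`bⱼNʲ = 0`, hence `mⱼNʲ = 0`),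
the transvection of the transformed Cartan tensor gives
`*Cᵢⱼₖ Bⁱ_α Bʲ_β Nᵏ = (2τ² − ρτ³) Cᵢⱼₖ Bⁱ_α Bʲ_β Nᵏ`, and consequently
`*M_{αβ} = √(2τ² − ρτ³) M_{αβ}` for the second fundamental v-tensors. -/
theorem kropina_second_fundamental_v_tensor
    {n m : ℕ}
    (C Cstar : Fin n → Fin n → Fin n → ℝ)
    (h : Fin n → Fin n → ℝ)
    (mv bb l N : Fin n → ℝ) (B : Fin m → Fin n → ℝ)
    (τ ρ β : ℝ)
    (hCstar : ∀ i j k, Cstar i j k =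
      (2 * τ ^ 2 - ρ * τ ^ 3) * C i j k
        - (τ ^ 2 / (2 * β)) * (4 - 3 * ρ * τ)
            * (h i j * mv k + h j k * mv i + h k i * mv j)
        - (6 * τ ^ 2 / β) * mv i * mv j * mv k)
    (hhBN : ∀ α, (∑ i, ∑ j, h i j * B α i * N j) = 0)
    (hhsym : ∀ i j, h i j = h j i)
    (hmN : (∑ j, mv j * N j) = 0)
    (hpos : 0 < 2 * τ ^ 2 - ρ * τ ^ 3)
    (Nstar : Fin n → ℝ)
    (hNstar : ∀ k, Nstar k = N k / Real.sqrt (2 * τ ^ 2 - ρ * τ ^ 3))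
    (M Mstar : Fin m → Fin m → ℝ)
    (hM : ∀ α γ, M α γ = ∑ i, ∑ j, ∑ k, C i j k * B α i * B γ j * N k)
    (hMstar : ∀ α γ, Mstar α γ = ∑ i, ∑ j, ∑ k, Cstar i j k * B α i * B γ j * Nstar k) :
    (∀ α γ, (∑ i, ∑ j, ∑ k, Cstar i j k * B α i * B γ j * N k) =
        (2 * τ ^ 2 - ρ * τ ^ 3) * ∑ i, ∑ j, ∑ k, C i j k * B α i * B γ j * N k) ∧
      (∀ α γ, Mstar α γ = Real.sqrt (2 * τ ^ 2 - ρ * τ ^ 3) * M α γ) :=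
  kropina_second_fundamental_v_tensor_general C Cstar h mv N B τ ρ β hCstar hhBN hhsym hmN Nstar
    hNstar M Mstar hM hMstar
end
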